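/- arXiv:0710.3027 — 5 statements merged into one kernel-verified Lean document; each statement's English description precedes it below -/
import Mathlib

section
/- Let p be a probability distribution on a finite set A, and for two families of density operators (D_a)_{a∈A}, (E_a)_{a∈A} on a finite-dimensional Hilbert space H define ρ = Σ_a p(a)|a⟩⟨a| ⊗ D_a, σ = Σ_a p(a) D_a, and τ = Σ_a p(a) E_a. Then S(ρ || p ⊗ τ) ≥ S(ρ || p ⊗ σ), with equality if and only if τ = σ (Donald's inequality for cq-states). Moreover, when supp(ρ) ≤ supp(p ⊗ τ), the difference equals S(σ || τ). -/
open Matrix Kronecker BigOperators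
open scoped ComplexOrder
open Classical

noncomputable def matFun {n : Type*} [Fintype n] [DecidableEq n]
    (f : ℝ → ℝ) (m : Matrix n n ℂ) : Matrix n n ℂ :=
  if h : m.IsHermitian then
    (h.eigenvectorUnitary : Matrix n n ℂ) *
      Matrix.diagonal (fun i => (f (h.eigenvalues i) : ℂ)) *
      star (h.eigenvectorUnitary : Matrix n n ℂ)
  else 0

noncomputable def matLog {n : Type*} [Fintype n] [DecidableEq n] (m : Matrix n n ℂ) :
    Matrix n n ℂ := matFun (Real.logb 2) m

/-- von Neumann entropy (base 2). -/
noncomputable def vnEnt {n : Type*} [Fintype n] [DecidableEq n] (m : Matrix n n ℂ) : ℝ :=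
  -((m * matLog m).trace.re)

/-- support domination: supp ρ ≤ supp σ. -/
def SuppLe {n : Type*} [Fintype n] (ρ σ : Matrix n n ℂ) : Prop :=
  ∀ v : n → ℂ, σ.mulVec v = 0 → ρ.mulVec v = 0

/-- quantum relative entropy (finite branch, base 2). -/
noncomputable def qRel {n : Type*} [Fintype n] [DecidableEq n] (ρ σ : Matrix n n ℂ) : ℝ :=
  ((ρ * matLog ρ).trace - (ρ * matLog σ).trace).re

/-- quantum relative entropy with the value +∞ when supports are not dominated. -/
noncomputable def qRelE {n : Type*} [Fintype n] [DecidableEq n] (ρ σ : Matrix n n ℂ) : EReal :=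
  if SuppLe ρ σ then ((qRel ρ σ : ℝ) : EReal) else ⊤

def IsDensity {n : Type*} [Fintype n] (ρ : Matrix n n ℂ) : Prop :=
  ρ.PosSemidef ∧ ρ.trace = 1

def IsProb {A : Type*} [Fintype A] (p : A → ℝ) : Prop :=
  (∀ a, 0 ≤ p a) ∧ ∑ a, p a = 1

/-- cq-state Σ_a p(a) |a⟩⟨a| ⊗ D_a. -/
noncomputable def cqState {A : Type*} [Fintype A] [DecidableEq A] {d : ℕ}
    (p : A → ℝ) (D : A → Matrix (Fin d) (Fin d) ℂ) :
    Matrix (A × Fin d) (A × Fin d) ℂ :=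
  ∑ a, (p a : ℂ) • (Matrix.single a a 1 ⊗ₖ D a)

/-- the average output state Σ_a p(a) D_a. -/
noncomputable def avgState {A : Type*} [Fintype A] {d : ℕ}
    (p : A → ℝ) (D : A → Matrix (Fin d) (Fin d) ℂ) : Matrix (Fin d) (Fin d) ℂ :=
  ∑ a, (p a : ℂ) • D a

/-- Holevo information χ(p, W) -/
noncomputable def holevo {A : Type*} [Fintype A] {d : ℕ}
    (p : A → ℝ) (W : A → Matrix (Fin d) (Fin d) ℂ) : ℝ :=
  vnEnt (avgState p W) - ∑ a, p a * vnEnt (W a)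

/-- trace norm -/
noncomputable def traceNorm {n : Type*} [Fintype n] [DecidableEq n] (m : Matrix n n ℂ) : ℝ :=
  (matFun Real.sqrt (mᴴ * m)).trace.re

/-- n-fold tensor product of matrices (entrywise formula). -/
noncomputable def bigKron {d n : ℕ} (ρ : Fin n → Matrix (Fin d) (Fin d) ℂ) :
    Matrix (Fin n → Fin d) (Fin n → Fin d) ℂ :=
  Matrix.of fun x y => ∏ i, ρ i (x i) (y i)

/-!
Diagonalizing `p ⊗ X` by `1 ⊗ V`, where `X = V diag(μ) V*`, gives
`tr ρ log (p ⊗ X) = Σ_a p(a) log p(a) + tr σ log X` as soon as `supp D_a ≤ supp X` whenever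
`p(a) ≠ 0`. This holds for `X = σ` because `p(a) D_a ≤ σ`, and for `X = τ` it is equivalent to
`supp ρ ≤ supp (p ⊗ τ)`. Subtracting the two instances gives
`S(ρ‖p ⊗ τ) = S(ρ‖p ⊗ σ) + S(σ‖τ)`, and Klein's inequality `S(σ‖τ) ≥ 0`, with equality only
for `σ = τ`, finishes the proof.

Klein's inequality reduces to the classical one: for eigendecompositions
`σ = U diag(μ) U*` and `τ = V diag(ν) V*`, the weights `P i j = |(U* V) i j|²` are doubly
stochastic and `S(σ‖τ) = Σ_{i,j} P i j (μ_i log μ_i - μ_i log ν_j)`, while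
`x log x - x log y ≥ x - y` with equality only for `x = y`.
-/

section Gibbs

open Real InformationTheory

theorem mul_log_sub_mul_log_eq_sub_add_mul_klFun (x : ℝ) {y : ℝ} (hy : 0 < y) :
    x * log x - x * log y = x - y + y * klFun (x / y) := by
  rcases eq_or_ne x 0 with rfl | hx
  · simp [klFun]
  · rw [klFun, log_div hx hy.ne']
    field_simp
    ring

theorem sub_le_mul_log_sub_mul_log {x y : ℝ} (hx : 0 ≤ x) (hy : 0 ≤ y) (hxy : y = 0 → x = 0) :
    x - y ≤ x * log x - x * log y := by
  rcases hy.eq_or_lt with rfl | hy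
  · simp [hxy rfl]
  · rw [mul_log_sub_mul_log_eq_sub_add_mul_klFun x hy, le_add_iff_nonneg_right]
    exact mul_nonneg hy.le (klFun_nonneg (div_nonneg hx hy.le))

theorem mul_log_sub_mul_log_eq_sub_iff {x y : ℝ} (hx : 0 ≤ x) (hy : 0 ≤ y)
    (hxy : y = 0 → x = 0) : x * log x - x * log y = x - y ↔ x = y := by
  rcases hy.eq_or_lt with rfl | hy
  · simp [hxy rfl]
  · rw [mul_log_sub_mul_log_eq_sub_add_mul_klFun x hy, add_eq_left, mul_eq_zero,
      klFun_eq_zero_iff (div_nonneg hx hy.le), div_eq_one_iff_eq hy.ne']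
    simp [hy.ne']

variable {ι κ : Type*} [Fintype ι] [Fintype κ] {P : ι → κ → ℝ} {x : ι → ℝ} {y : κ → ℝ}

theorem sum_sum_mul_logb_sub_eq (hrow : ∀ i, ∑ j, P i j = 1) (hcol : ∀ j, ∑ i, P i j = 1)
    (hsum : ∑ i, x i = ∑ j, y j) :
    ∑ i, ∑ j, P i j * (x i * logb 2 (x i) - x i * logb 2 (y j)) =
      (∑ i, ∑ j, P i j * (x i * log (x i) - x i * log (y j) - (x i - y j))) / log 2 := by
  have hmass : ∑ i, ∑ j, P i j * (x i - y j) = 0 := by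
    simp only [mul_sub, Finset.sum_sub_distrib]
    rw [Finset.sum_comm (f := fun i j => P i j * y j)]
    simp only [← Finset.sum_mul, hrow, hcol, one_mul, hsum, sub_self]
  rw [← add_zero (∑ i, ∑ j, P i j * (x i * log (x i) - x i * log (y j) - (x i - y j))), ← hmass]
  simp only [← Finset.sum_add_distrib, Finset.sum_div]
  refine Finset.sum_congr rfl fun i _ => Finset.sum_congr rfl fun j _ => ?_
  rw [logb, logb]
  ring

theorem mul_mul_log_sub_sub_nonneg {w a b : ℝ} (hw : 0 ≤ w) (ha : 0 ≤ a) (hb : 0 ≤ b)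
    (hab : w ≠ 0 → b = 0 → a = 0) : 0 ≤ w * (a * log a - a * log b - (a - b)) := by
  rcases eq_or_ne w 0 with rfl | hw0
  · simp
  · exact mul_nonneg hw (sub_nonneg.2 (sub_le_mul_log_sub_mul_log ha hb (hab hw0)))

theorem sum_sum_mul_logb_sub_nonneg (hP : ∀ i j, 0 ≤ P i j) (hrow : ∀ i, ∑ j, P i j = 1)
    (hcol : ∀ j, ∑ i, P i j = 1) (hx : ∀ i, 0 ≤ x i) (hy : ∀ j, 0 ≤ y j)
    (hsum : ∑ i, x i = ∑ j, y j) (hsupp : ∀ i j, P i j ≠ 0 → y j = 0 → x i = 0) :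
    0 ≤ ∑ i, ∑ j, P i j * (x i * logb 2 (x i) - x i * logb 2 (y j)) := by
  rw [sum_sum_mul_logb_sub_eq hrow hcol hsum]
  refine div_nonneg (Finset.sum_nonneg fun i _ => Finset.sum_nonneg fun j _ => ?_)
    (log_nonneg one_le_two)
  exact mul_mul_log_sub_sub_nonneg (hP i j) (hx i) (hy j) (hsupp i j)

theorem eq_of_sum_sum_mul_logb_sub_eq_zero (hP : ∀ i j, 0 ≤ P i j)
    (hrow : ∀ i, ∑ j, P i j = 1) (hcol : ∀ j, ∑ i, P i j = 1) (hx : ∀ i, 0 ≤ x i)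
    (hy : ∀ j, 0 ≤ y j) (hsum : ∑ i, x i = ∑ j, y j)
    (hsupp : ∀ i j, P i j ≠ 0 → y j = 0 → x i = 0)
    (h0 : ∑ i, ∑ j, P i j * (x i * logb 2 (x i) - x i * logb 2 (y j)) = 0) :
    ∀ i j, P i j ≠ 0 → x i = y j := by
  intro i j hij
  have hterm i j : 0 ≤ P i j * (x i * log (x i) - x i * log (y j) - (x i - y j)) :=
    mul_mul_log_sub_sub_nonneg (hP i j) (hx i) (hy j) (hsupp i j)
  rw [sum_sum_mul_logb_sub_eq hrow hcol hsum, div_eq_zero_iff,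
    or_iff_left (log_pos one_lt_two).ne',
    Finset.sum_eq_zero_iff_of_nonneg fun i _ => Finset.sum_nonneg fun j _ => hterm i j] at h0
  have hij0 := (Finset.sum_eq_zero_iff_of_nonneg fun j _ => hterm i j).1
    (h0 i (Finset.mem_univ i)) j (Finset.mem_univ j)
  rw [mul_eq_zero, or_iff_right hij, sub_eq_zero,
    mul_log_sub_mul_log_eq_sub_iff (hx i) (hy j) (hsupp i j hij)] at hij0
  exact hij0

end Gibbs

namespace Matrix

variable {n : Type*} [Fintype n] [DecidableEq n]

theorem diagonal_mul_eq_mul_diagonal_iff {a b : n → ℂ} {W : Matrix n n ℂ} :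
    diagonal a * W = W * diagonal b ↔ ∀ i j, W i j ≠ 0 → a i = b j := by
  refine ⟨fun h i j hW => ?_, fun h => ?_⟩
  · have hij := ext_iff.2 h i j
    rw [diagonal_mul, mul_diagonal, mul_comm] at hij
    exact mul_left_cancel₀ hW hij
  · ext i j
    rw [diagonal_mul, mul_diagonal]
    by_cases hW : W i j = 0
    · simp [hW]
    · rw [h i j hW, mul_comm]

theorem conj_diagonal_eq_conj_diagonal_iff {U V : Matrix n n ℂ} (hU : U ∈ unitaryGroup n ℂ)
    (hV : V ∈ unitaryGroup n ℂ) {a b : n → ℂ} :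
    U * diagonal a * star U = V * diagonal b * star V ↔
      ∀ i j, (star U * V) i j ≠ 0 → a i = b j := by
  rw [← diagonal_mul_eq_mul_diagonal_iff]
  have hUU := Unitary.star_mul_self_of_mem hU
  have hUU' := Unitary.mul_star_self_of_mem hU
  have hVV := Unitary.mul_star_self_of_mem hV
  have hVV' := Unitary.star_mul_self_of_mem hV
  constructor
  · intro h
    calc diagonal a * (star U * V) = star U * (U * diagonal a * star U) * V := by
          simp only [Matrix.mul_assoc, ← Matrix.mul_assoc (star U) U, hUU, Matrix.one_mul]
      _ = star U * V * diagonal b := by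
          rw [h]; simp only [Matrix.mul_assoc, hVV', Matrix.mul_one]
  · intro h
    calc U * diagonal a * star U = U * (diagonal a * (star U * V)) * star V := by
          simp only [Matrix.mul_assoc, hVV, Matrix.mul_one]
      _ = V * diagonal b * star V := by
          rw [h]; simp only [← Matrix.mul_assoc, hUU', Matrix.one_mul]

theorem PosSemidef.exists_unitary_conj_diagonal {X : Matrix n n ℂ} (hX : X.PosSemidef) :
    ∃ U ∈ unitaryGroup n ℂ, ∃ μ : n → ℝ,
      (∀ i, 0 ≤ μ i) ∧ X = U * diagonal (fun i => (μ i : ℂ)) * star U :=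
  ⟨_, hX.1.eigenvectorUnitary.2, _, hX.eigenvalues_nonneg, hX.1.spectral_theorem⟩

theorem IsHermitian.exists_unitary_conj_diagonal {X : Matrix n n ℂ} (hX : X.IsHermitian) :
    ∃ U ∈ unitaryGroup n ℂ, ∃ μ : n → ℝ, X = U * diagonal (fun i => (μ i : ℂ)) * star U :=
  ⟨_, hX.eigenvectorUnitary.2, _, hX.spectral_theorem⟩

theorem isHermitian_conj_diagonal (U : Matrix n n ℂ) (μ : n → ℝ) :
    (U * diagonal (fun i => (μ i : ℂ)) * star U).IsHermitian :=
  isHermitian_mul_mul_conjTranspose U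
    (isHermitian_diagonal_of_self_adjoint _ (by ext i; simp))

theorem trace_mul_conj_diagonal (B U : Matrix n n ℂ) (c : n → ℂ) :
    (B * (U * diagonal c * star U)).trace = ∑ j, c j * (star U * B * U) j j := by
  rw [← Matrix.mul_assoc, trace_mul_cycle, ← Matrix.mul_assoc, trace]
  exact Finset.sum_congr rfl fun j _ => by rw [diag_apply, mul_diagonal, mul_comm]

theorem trace_conj_diagonal {U : Matrix n n ℂ} (hU : U ∈ unitaryGroup n ℂ) (c : n → ℂ) :
    (U * diagonal c * star U).trace = ∑ i, c i := by
  rw [trace_mul_cycle, Unitary.star_mul_self_of_mem hU, Matrix.one_mul,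
    trace_diagonal]

theorem conj_conj_diagonal_apply_self (U V : Matrix n n ℂ) (μ : n → ℝ) (j : n) :
    (star V * (U * diagonal (fun i => (μ i : ℂ)) * star U) * V) j j =
      ((∑ i, μ i * Complex.normSq ((star U * V) i j) : ℝ) : ℂ) := by
  have : star V * (U * diagonal (fun i => (μ i : ℂ)) * star U) * V =
      star (star U * V) * diagonal (fun i => (μ i : ℂ)) * (star U * V) := by
    simp only [star_mul, star_star, Matrix.mul_assoc]
  rw [this, mul_apply, Complex.ofReal_sum]
  refine Finset.sum_congr rfl fun i _ => ?_
  rw [mul_diagonal, star_apply, Complex.ofReal_mul, ← Complex.mul_conj, Complex.star_def]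
  ring

theorem sum_normSq_apply_right {W : Matrix n n ℂ} (hW : W ∈ unitaryGroup n ℂ) (i : n) :
    ∑ j, Complex.normSq (W i j) = 1 := by
  have h := ext_iff.2 (Unitary.mul_star_self_of_mem hW) i i
  simp only [mul_apply, one_apply_eq, star_apply, Complex.star_def, Complex.mul_conj] at h
  exact_mod_cast h

theorem sum_normSq_apply_left {W : Matrix n n ℂ} (hW : W ∈ unitaryGroup n ℂ) (j : n) :
    ∑ i, Complex.normSq (W i j) = 1 := by
  have h := ext_iff.2 (Unitary.star_mul_self_of_mem hW) j j
  simp only [mul_apply, one_apply_eq, star_apply, Complex.star_def, mul_comm _ (W _ j),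
    Complex.mul_conj] at h
  exact_mod_cast h

theorem diagonal_kronecker_conj_diagonal {m : Type*} [Fintype m] [DecidableEq m] (c : m → ℝ)
    (V : Matrix n n ℂ) (μ : n → ℝ) :
    diagonal (fun a => (c a : ℂ)) ⊗ₖ (V * diagonal (fun j => (μ j : ℂ)) * star V) =
      ((1 : Matrix m m ℂ) ⊗ₖ V) * diagonal (fun x => ((c x.1 * μ x.2 : ℝ) : ℂ)) *
        star ((1 : Matrix m m ℂ) ⊗ₖ V) := by
  have hdiag : diagonal (fun x : m × n => ((c x.1 * μ x.2 : ℝ) : ℂ)) =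
      diagonal (fun a => (c a : ℂ)) ⊗ₖ diagonal (fun j => (μ j : ℂ)) := by
    rw [diagonal_kronecker_diagonal]
    push_cast
    rfl
  rw [hdiag, star_eq_conjTranspose ((1 : Matrix m m ℂ) ⊗ₖ V), conjTranspose_kronecker,
    conjTranspose_one, ← star_eq_conjTranspose V, ← mul_kronecker_mul, ← mul_kronecker_mul,
    Matrix.one_mul, Matrix.mul_one]

theorem conj_diagonal_mulVec_eq_zero {U : Matrix n n ℂ} (hU : U ∈ unitaryGroup n ℂ)
    {c : n → ℂ} {j : n} (hj : c j = 0) :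
    (U * diagonal c * star U) *ᵥ (U *ᵥ Pi.single j 1) = 0 := by
  rw [mulVec_mulVec, Matrix.mul_assoc, Unitary.star_mul_self_of_mem hU, Matrix.mul_one,
    mulVec_single_one]
  ext k
  simp [hj]

theorem mul_mul_apply_eq_zero_of_mulVec_eq_zero {B V : Matrix n n ℂ} {j : n}
    (h : B *ᵥ (V *ᵥ Pi.single j 1) = 0) (M : Matrix n n ℂ) (i : n) : (M * B * V) i j = 0 := by
  rw [← col_apply (M * B * V) j i, ← mulVec_single_one, ← mulVec_mulVec, ← mulVec_mulVec, h,
    mulVec_zero, Pi.zero_apply]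

end Matrix

section QuantumRelativeEntropy

open Matrix

variable {n : Type*} [Fintype n] [DecidableEq n]

theorem matFun_conj_diagonal (f : ℝ → ℝ) {U : Matrix n n ℂ} (hU : U ∈ unitaryGroup n ℂ)
    (μ : n → ℝ) :
    matFun f (U * diagonal (fun i => (μ i : ℂ)) * star U) =
      U * diagonal (fun i => (f (μ i) : ℂ)) * star U := by
  have hX := isHermitian_conj_diagonal U μ
  rw [matFun, dif_pos hX]
  have hE := hX.eigenvectorUnitary.2
  have heig := (conj_diagonal_eq_conj_diagonal_iff hE hU).1 hX.spectral_theorem.symm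
  refine (conj_diagonal_eq_conj_diagonal_iff hE hU).2 fun i j hij => ?_
  have h : (hX.eigenvalues i : ℂ) = μ j := heig i j hij
  rw [Complex.ofReal_inj.1 h]

theorem trace_mul_matLog_conj_diagonal (B : Matrix n n ℂ) {U : Matrix n n ℂ}
    (hU : U ∈ unitaryGroup n ℂ) (μ : n → ℝ) :
    (B * matLog (U * diagonal (fun i => (μ i : ℂ)) * star U)).trace =
      ∑ j, (Real.logb 2 (μ j) : ℂ) * (star U * B * U) j j := by
  rw [matLog, matFun_conj_diagonal _ hU, trace_mul_conj_diagonal]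

open Real in
theorem qRel_conj_diagonal {U V : Matrix n n ℂ} (hU : U ∈ unitaryGroup n ℂ)
    (hV : V ∈ unitaryGroup n ℂ) (μ ν : n → ℝ) :
    qRel (U * diagonal (fun i => (μ i : ℂ)) * star U) (V * diagonal (fun j => (ν j : ℂ)) * star V) =
      ∑ i, ∑ j, Complex.normSq ((star U * V) i j) * (μ i * logb 2 (μ i) - μ i * logb 2 (ν j)) := by
  have hrow := sum_normSq_apply_right (mul_mem (Unitary.star_mem hU) hV)
  simp only [qRel, trace_mul_matLog_conj_diagonal _ hU, trace_mul_matLog_conj_diagonal _ hV,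
    conj_conj_diagonal_apply_self, Unitary.star_mul_self_of_mem hU, ← Complex.ofReal_mul,
    ← Complex.ofReal_sum, ← Complex.ofReal_sub, Complex.ofReal_re]
  have hdiag i : ∑ k, μ k * Complex.normSq ((1 : Matrix n n ℂ) k i) = μ i := by
    simp [one_apply]
  simp only [hdiag, mul_sub, Finset.sum_sub_distrib, Finset.mul_sum]
  rw [Finset.sum_comm (f := fun j i => logb 2 (ν j) * (μ i * _))]
  congr 1
  · refine Finset.sum_congr rfl fun i _ => ?_
    rw [← Finset.sum_mul, hrow, one_mul, mul_comm]
  · exact Finset.sum_congr rfl fun i _ => Finset.sum_congr rfl fun j _ => by ring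

theorem SuppLe.eq_zero_of_conj_diagonal {U V : Matrix n n ℂ} (hU : U ∈ unitaryGroup n ℂ)
    (hV : V ∈ unitaryGroup n ℂ) {μ ν : n → ℝ}
    (h : SuppLe (U * diagonal (fun i => (μ i : ℂ)) * star U)
      (V * diagonal (fun j => (ν j : ℂ)) * star V))
    {i j : n} (hij : (star U * V) i j ≠ 0) (hν : ν j = 0) : μ i = 0 := by
  have hker := h _
    (conj_diagonal_mulVec_eq_zero hV (c := fun j => (ν j : ℂ)) (j := j) (by simp [hν]))
  have hentry := mul_mul_apply_eq_zero_of_mulVec_eq_zero hker (star U) i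
  rw [show star U * (U * diagonal (fun i => (μ i : ℂ)) * star U) * V =
      diagonal (fun i => (μ i : ℂ)) * (star U * V) by
    simp only [← Matrix.mul_assoc, Unitary.star_mul_self_of_mem hU, Matrix.one_mul],
    diagonal_mul] at hentry
  exact_mod_cast (mul_eq_zero.1 hentry).resolve_right hij

theorem qRel_nonneg {σ τ : Matrix n n ℂ} (hσ : σ.PosSemidef) (hτ : τ.PosSemidef)
    (htr : σ.trace = τ.trace) (h : SuppLe σ τ) : 0 ≤ qRel σ τ := by
  obtain ⟨U, hU, μ, hμ, rfl⟩ := hσ.exists_unitary_conj_diagonal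
  obtain ⟨V, hV, ν, hν, rfl⟩ := hτ.exists_unitary_conj_diagonal
  have hW := mul_mem (Unitary.star_mem hU) hV
  rw [trace_conj_diagonal hU, trace_conj_diagonal hV] at htr
  rw [qRel_conj_diagonal hU hV]
  exact sum_sum_mul_logb_sub_nonneg (fun _ _ => Complex.normSq_nonneg _)
    (sum_normSq_apply_right hW) (sum_normSq_apply_left hW) hμ hν (by exact_mod_cast htr)
    fun i j hij => h.eq_zero_of_conj_diagonal hU hV (mt Complex.normSq_eq_zero.2 hij)

theorem eq_of_qRel_eq_zero {σ τ : Matrix n n ℂ} (hσ : σ.PosSemidef) (hτ : τ.PosSemidef)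
    (htr : σ.trace = τ.trace) (h : SuppLe σ τ) (h0 : qRel σ τ = 0) : σ = τ := by
  obtain ⟨U, hU, μ, hμ, rfl⟩ := hσ.exists_unitary_conj_diagonal
  obtain ⟨V, hV, ν, hν, rfl⟩ := hτ.exists_unitary_conj_diagonal
  have hW := mul_mem (Unitary.star_mem hU) hV
  rw [trace_conj_diagonal hU, trace_conj_diagonal hV] at htr
  rw [qRel_conj_diagonal hU hV] at h0
  have hμν := eq_of_sum_sum_mul_logb_sub_eq_zero (fun _ _ => Complex.normSq_nonneg _)
    (sum_normSq_apply_right hW) (sum_normSq_apply_left hW) hμ hν (by exact_mod_cast htr)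
    (fun i j hij => h.eq_zero_of_conj_diagonal hU hV (mt Complex.normSq_eq_zero.2 hij)) h0
  refine (conj_diagonal_eq_conj_diagonal_iff hU hV).2 fun i j hij => ?_
  rw [hμν i j (mt Complex.normSq_eq_zero.1 hij)]

end QuantumRelativeEntropy

section AvgState

open Matrix

variable {A : Type*} [Fintype A] {d : ℕ} (p : A → ℝ)

theorem isDensity_avgState {D : A → Matrix (Fin d) (Fin d) ℂ} (hp : IsProb p)
    (hD : ∀ a, IsDensity (D a)) : IsDensity (avgState p D) := by
  refine ⟨posSemidef_sum _ fun a _ => (hD a).1.smul (by exact_mod_cast hp.1 a), ?_⟩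
  simp only [avgState, trace_sum, trace_smul, (hD _).2, smul_eq_mul, mul_one]
  exact_mod_cast hp.2

theorem suppLe_avgState {D : A → Matrix (Fin d) (Fin d) ℂ} (hp : ∀ a, 0 ≤ p a)
    (hD : ∀ a, (D a).PosSemidef) {a : A} (ha : p a ≠ 0) : SuppLe (D a) (avgState p D) := by
  intro v hv
  have hsum : ∑ b, (p b : ℂ) * (star v ⬝ᵥ D b *ᵥ v) = 0 := by
    simpa [avgState, sum_mulVec, smul_mulVec, dotProduct_sum, dotProduct_smul] using
      congrArg (star v ⬝ᵥ ·) hv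
  have hnonneg b : 0 ≤ (p b : ℂ) * (star v ⬝ᵥ D b *ᵥ v) :=
    mul_nonneg (by exact_mod_cast hp b) ((hD b).dotProduct_mulVec_nonneg v)
  have ha0 := (Finset.sum_eq_zero_iff_of_nonneg fun b _ => hnonneg b).1 hsum a (Finset.mem_univ a)
  exact ((hD a).dotProduct_mulVec_zero_iff v).1
    ((mul_eq_zero.1 ha0).resolve_left (by exact_mod_cast ha))

theorem avgState_suppLe {D : A → Matrix (Fin d) (Fin d) ℂ} {X : Matrix (Fin d) (Fin d) ℂ}
    (hD : ∀ a, p a ≠ 0 → SuppLe (D a) X) : SuppLe (avgState p D) X := by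
  intro v hv
  simp only [avgState, sum_mulVec, smul_mulVec]
  refine Finset.sum_eq_zero fun a _ => ?_
  by_cases ha : p a = 0
  · simp [ha]
  · rw [hD a ha v hv, smul_zero]

theorem conj_avgState (D : A → Matrix (Fin d) (Fin d) ℂ) (V : Matrix (Fin d) (Fin d) ℂ) :
    star V * avgState p D * V = avgState p (fun a => star V * D a * V) := by
  simp only [avgState, Finset.mul_sum, Finset.sum_mul, mul_smul_comm, smul_mul_assoc]

end AvgState

section CQState

open Matrix

variable {A : Type*} [Fintype A] [DecidableEq A] {d : ℕ} (p : A → ℝ)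

theorem cqState_apply (D : A → Matrix (Fin d) (Fin d) ℂ) (a b : A) (i j : Fin d) :
    cqState p D (a, i) (b, j) = if a = b then (p a : ℂ) * D a i j else 0 := by
  simp only [cqState, Matrix.sum_apply, Matrix.smul_apply, kroneckerMap_apply, single_apply]
  split_ifs with hab
  · subst hab
    simp [Finset.sum_ite_eq']
  · refine Finset.sum_eq_zero fun c _ => ?_
    simp only [smul_eq_mul]
    rw [if_neg (by rintro ⟨rfl, rfl⟩; exact hab rfl), zero_mul, mul_zero]

theorem cqState_mulVec_apply (D : A → Matrix (Fin d) (Fin d) ℂ) (w : A × Fin d → ℂ) (a : A)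
    (i : Fin d) : (cqState p D *ᵥ w) (a, i) = p a * (D a *ᵥ fun k => w (a, k)) i := by
  simp only [mulVec, dotProduct, Fintype.sum_prod_type, cqState_apply, ite_mul, zero_mul,
    Finset.sum_ite_irrel, Finset.sum_const_zero, Finset.sum_ite_eq, Finset.mem_univ, if_true,
    Finset.mul_sum, mul_assoc]

theorem diagonal_kronecker_eq_cqState (X : Matrix (Fin d) (Fin d) ℂ) :
    diagonal (fun a => (p a : ℂ)) ⊗ₖ X = cqState p (fun _ => X) := by
  ext ⟨a, i⟩ ⟨b, j⟩
  rw [cqState_apply, kroneckerMap_apply, diagonal_apply]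
  split_ifs <;> simp

theorem suppLe_cqState_diagonal_kronecker_iff (D : A → Matrix (Fin d) (Fin d) ℂ)
    (X : Matrix (Fin d) (Fin d) ℂ) :
    SuppLe (cqState p D) (diagonal (fun a => (p a : ℂ)) ⊗ₖ X) ↔
      ∀ a, p a ≠ 0 → SuppLe (D a) X := by
  simp only [SuppLe, diagonal_kronecker_eq_cqState, funext_iff, Prod.forall,
    cqState_mulVec_apply, Pi.zero_apply, mul_eq_zero, Complex.ofReal_eq_zero]
  refine ⟨fun h a ha v hv i => ?_, fun h w hw a i => ?_⟩
  · exact (h (fun x => v x.2) (fun b k => Or.inr (hv k)) a i).resolve_left ha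
  · by_cases ha : p a = 0
    · exact Or.inl ha
    · exact Or.inr (h a ha _ (fun k => (hw a k).resolve_left ha) i)

theorem conj_cqState (D : A → Matrix (Fin d) (Fin d) ℂ) (V : Matrix (Fin d) (Fin d) ℂ) :
    star ((1 : Matrix A A ℂ) ⊗ₖ V) * cqState p D * ((1 : Matrix A A ℂ) ⊗ₖ V) =
      cqState p (fun a => star V * D a * V) := by
  simp only [cqState, star_eq_conjTranspose, conjTranspose_kronecker, conjTranspose_one,
    Finset.mul_sum, Finset.sum_mul, mul_smul_comm, smul_mul_assoc, ← mul_kronecker_mul,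
    Matrix.one_mul, Matrix.mul_one]

theorem trace_cqState_mul_matLog {D : A → Matrix (Fin d) (Fin d) ℂ} (hD : ∀ a, (D a).trace = 1)
    {X : Matrix (Fin d) (Fin d) ℂ} (hX : X.IsHermitian) (hsupp : ∀ a, p a ≠ 0 → SuppLe (D a) X) :
    (cqState p D * matLog (diagonal (fun a => (p a : ℂ)) ⊗ₖ X)).trace =
      ((∑ a, p a * Real.logb 2 (p a) : ℝ) : ℂ) + (avgState p D * matLog X).trace := by
  obtain ⟨V, hV, μ, rfl⟩ := hX.exists_unitary_conj_diagonal
  have hV' : (1 : Matrix A A ℂ) ⊗ₖ V ∈ unitaryGroup (A × Fin d) ℂ :=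
    kronecker_mem_unitary (one_mem _) hV
  rw [diagonal_kronecker_conj_diagonal, trace_mul_matLog_conj_diagonal _ hV',
    trace_mul_matLog_conj_diagonal _ hV, conj_cqState, conj_avgState, Fintype.sum_prod_type]
  simp only [cqState_apply, if_true, avgState, Matrix.sum_apply, Matrix.smul_apply, smul_eq_mul]
  have htrace a : ∑ j, (star V * D a * V) j j = 1 := by
    calc ∑ j, (star V * D a * V) j j = (V * star V * D a).trace := trace_mul_cycle _ _ _
      _ = 1 := by rw [Unitary.mul_star_self_of_mem hV, Matrix.one_mul, hD a]
  have hker a j (ha : p a ≠ 0) (hj : μ j = 0) : (star V * D a * V) j j = 0 :=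
    mul_mul_apply_eq_zero_of_mulVec_eq_zero
      (hsupp a ha _ (conj_diagonal_mulVec_eq_zero hV (j := j) (by simp [hj]))) (star V) j
  -- Since `logb 2 0 = 0`, `logb (p a * μ j)` only splits when `μ j ≠ 0`; the support
  -- hypothesis makes the remaining terms vanish.
  have hterm a j : (Real.logb 2 (p a * μ j) : ℂ) * (p a * (star V * D a * V) j j) =
      p a * Real.logb 2 (p a) * (star V * D a * V) j j +
        Real.logb 2 (μ j) * (p a * (star V * D a * V) j j) := by
    by_cases ha : p a = 0
    · simp [ha]
    by_cases hj : μ j = 0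
    · simp [hj, hker a j ha hj]
    rw [Real.logb_mul ha hj]
    push_cast
    ring
  simp only [hterm, Finset.sum_add_distrib, ← Finset.mul_sum, htrace, mul_one]
  rw [Finset.sum_comm]
  push_cast
  simp only [Finset.mul_sum]

theorem qRel_cqState_diagonal_kronecker {D : A → Matrix (Fin d) (Fin d) ℂ}
    (hD : ∀ a, (D a).trace = 1) (hσ : (avgState p D).IsHermitian)
    (hσsupp : ∀ a, p a ≠ 0 → SuppLe (D a) (avgState p D)) {X : Matrix (Fin d) (Fin d) ℂ}
    (hX : X.IsHermitian) (hXsupp : ∀ a, p a ≠ 0 → SuppLe (D a) X) :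
    qRel (cqState p D) (diagonal (fun a => (p a : ℂ)) ⊗ₖ X) =
      qRel (cqState p D) (diagonal (fun a => (p a : ℂ)) ⊗ₖ avgState p D) +
        qRel (avgState p D) X := by
  simp only [qRel, Complex.sub_re, trace_cqState_mul_matLog p hD hX hXsupp,
    trace_cqState_mul_matLog p hD hσ hσsupp, Complex.add_re]
  ring

end CQState

/-- Donald's inequality for cq-states, the equality condition, and the
identity for the difference of relative entropies. -/
theorem stmt1 {A : Type*} [Fintype A] [DecidableEq A] {d : ℕ}
    (p : A → ℝ) (hp : IsProb p) (D E : A → Matrix (Fin d) (Fin d) ℂ)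
    (hD : ∀ a, IsDensity (D a)) (hE : ∀ a, IsDensity (E a)) :
    (qRelE (cqState p D) (Matrix.diagonal (fun a => (p a : ℂ)) ⊗ₖ avgState p D) ≤
        qRelE (cqState p D) (Matrix.diagonal (fun a => (p a : ℂ)) ⊗ₖ avgState p E))
    ∧ (qRelE (cqState p D) (Matrix.diagonal (fun a => (p a : ℂ)) ⊗ₖ avgState p E) =
        qRelE (cqState p D) (Matrix.diagonal (fun a => (p a : ℂ)) ⊗ₖ avgState p D)
        ↔ avgState p E = avgState p D)
    ∧ (SuppLe (cqState p D) (Matrix.diagonal (fun a => (p a : ℂ)) ⊗ₖ avgState p E) →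
        qRel (cqState p D) (Matrix.diagonal (fun a => (p a : ℂ)) ⊗ₖ avgState p E)
          = qRel (cqState p D) (Matrix.diagonal (fun a => (p a : ℂ)) ⊗ₖ avgState p D)
            + qRel (avgState p D) (avgState p E)) := by
  set ρ := cqState p D
  set σ := avgState p D
  set τ := avgState p E
  have hσ : IsDensity σ := isDensity_avgState p hp hD
  have hτ : IsDensity τ := isDensity_avgState p hp hE
  have htr := hσ.2.trans hτ.2.symm
  have hσsupp a : p a ≠ 0 → SuppLe (D a) σ := suppLe_avgState p hp.1 fun b => (hD b).1
  have hS := (suppLe_cqState_diagonal_kronecker_iff p D σ).2 hσsupp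
  have hchain (hT : SuppLe ρ (Matrix.diagonal (fun a => (p a : ℂ)) ⊗ₖ τ)) :=
    qRel_cqState_diagonal_kronecker p (fun a => (hD a).2) hσ.1.1 hσsupp hτ.1.1
      ((suppLe_cqState_diagonal_kronecker_iff p D τ).1 hT)
  have hστ (hT : SuppLe ρ (Matrix.diagonal (fun a => (p a : ℂ)) ⊗ₖ τ)) : SuppLe σ τ :=
    avgState_suppLe p ((suppLe_cqState_diagonal_kronecker_iff p D τ).1 hT)
  refine ⟨?_, ⟨fun h => ?_, fun h => by rw [h]⟩, hchain⟩
  · rw [qRelE, qRelE, if_pos hS]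
    split_ifs with hT
    · exact EReal.coe_le_coe_iff.2 (by linarith [hchain hT, qRel_nonneg hσ.1 hτ.1 htr (hστ hT)])
    · exact le_top
  · rw [qRelE, qRelE, if_pos hS] at h
    split_ifs at h with hT
    · have h0 : qRel σ τ = 0 := by linarith [hchain hT, EReal.coe_eq_coe_iff.1 h]
      exact (eq_of_qRel_eq_zero hσ.1 hτ.1 htr (hστ hT) h0).symm
    · exact absurd h (EReal.top_ne_coe _)
end

section
/- Let ρ, σ be density operators on a finite-dimensional Hilbert space K with S(ρ||σ) < ∞, and let P be a projection on K satisfying tr(ρP) ≥ 1 − τ₁ and tr(σP) ≤ 2^{−(S₀ − τ₂)} for some S₀ ≥ 0, τ₁ ∈ [0,1], τ₂ ≥ 0. Then for the two-outcome measurement M = {P, 1−P}, the classical relative entropy S_M(ρ||σ) := D((tr(ρP), 1−tr(ρP)) || (tr(σP), 1−tr(σP))) satisfies S_M(ρ||σ) ≥ −1 + (1−τ₁)(S₀ − τ₂) − τ₁ · (−log λ_min(σ)) provided σ is invertible with smallest eigenvalue λ_min(σ). -/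
open Matrix Kronecker BigOperators
open scoped ComplexOrder
open Classical

/-- binary Kullback-Leibler divergence (base 2). -/
noncomputable def klBin (x y : ℝ) : ℝ :=
  x * Real.logb 2 (x / y) + (1 - x) * Real.logb 2 ((1 - x) / (1 - y))

/-!
Write `x = tr ρP`, `y = tr σP` and `λ = λ_min(σ)`. In the Loewner order `λ • ρ ≤ λ • 1 ≤ σ`, so
`λ x ≤ y` and `λ (1 - x) ≤ 1 - y`: the outcome distribution of `ρ` is absolutely continuous with
respect to that of `σ`, hence the junk values of `· / 0` never enter `klBin` and
`D(x‖y) = -h(x) - x log y - (1 - x) log (1 - y)`. The last term is nonnegative and `h(x) ≤ 1`,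
so `D(x‖y) ≥ -1 - x log y`; finally `-log y ≥ S₀ - τ₂`, `x ≥ 1 - τ₁`, and `τ₁ log λ ≤ 0`.
-/

open scoped MatrixOrder

namespace Matrix

variable {𝕜 n : Type*} [RCLike 𝕜] [Fintype n] [DecidableEq n]

open scoped Matrix.Norms.L2Operator in
lemma PosSemidef.trace_mul_nonneg {A B : Matrix n n 𝕜} (hA : A.PosSemidef) (hB : B.PosSemidef) :
    0 ≤ (A * B).trace := by
  obtain ⟨C, rfl⟩ := CStarAlgebra.nonneg_iff_eq_star_mul_self.mp hB.nonneg
  rw [← mul_assoc, trace_mul_cycle]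
  exact (hA.mul_mul_conjTranspose_same C).trace_nonneg

lemma trace_mul_le_trace_mul_of_le {A B Q : Matrix n n 𝕜} (hAB : A ≤ B) (hQ : Q.PosSemidef) :
    (A * Q).trace ≤ (B * Q).trace := by
  have := (le_iff.mp hAB).trace_mul_nonneg hQ
  rwa [sub_mul, trace_sub, sub_nonneg] at this

lemma IsHermitian.smul_one_le_of_le_eigenvalues {A : Matrix n n 𝕜} (hA : A.IsHermitian) {c : ℝ}
    (hc : ∀ i, c ≤ hA.eigenvalues i) : c • (1 : Matrix n n 𝕜) ≤ A := by
  rw [← Algebra.algebraMap_eq_smul_one, algebraMap_le_iff_le_spectrum hA.isSelfAdjoint,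
    hA.spectrum_real_eq_range_eigenvalues]
  rintro _ ⟨i, rfl⟩
  exact hc i

lemma IsHermitian.le_smul_one_of_eigenvalues_le {A : Matrix n n 𝕜} (hA : A.IsHermitian) {c : ℝ}
    (hc : ∀ i, hA.eigenvalues i ≤ c) : A ≤ c • (1 : Matrix n n 𝕜) := by
  rw [← Algebra.algebraMap_eq_smul_one, le_algebraMap_iff_spectrum_le hA.isSelfAdjoint,
    hA.spectrum_real_eq_range_eigenvalues]
  rintro _ ⟨i, rfl⟩
  exact hc i

end Matrix

namespace IsDensity

variable {n : Type*} [Fintype n] [DecidableEq n] {ρ : Matrix n n ℂ}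

lemma eigenvalues_le_one (hρ : IsDensity ρ) (i : n) : hρ.1.1.eigenvalues i ≤ 1 := by
  have hsum : ∑ j, hρ.1.1.eigenvalues j = 1 := by
    have := congrArg Complex.re (hρ.1.1.trace_eq_sum_eigenvalues.symm.trans hρ.2)
    simpa [Complex.re_sum] using this
  exact hsum ▸ Finset.single_le_sum (fun j _ => hρ.1.eigenvalues_nonneg j) (Finset.mem_univ i)

lemma le_one (hρ : IsDensity ρ) : ρ ≤ 1 := by
  simpa using hρ.1.1.le_smul_one_of_eigenvalues_le hρ.eigenvalues_le_one

lemma trace_mul_one_sub (hρ : IsDensity ρ) (Q : Matrix n n ℂ) :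
    (ρ * (1 - Q)).trace = 1 - (ρ * Q).trace := by
  rw [mul_sub, mul_one, trace_sub, hρ.2]

lemma re_trace_mul_mem_Icc (hρ : IsDensity ρ) {Q : Matrix n n ℂ} (hQ₀ : 0 ≤ Q) (hQ₁ : Q ≤ 1) :
    (ρ * Q).trace.re ∈ Set.Icc 0 1 := by
  have h₀ := (Complex.le_def.mp (hρ.1.trace_mul_nonneg hQ₀.posSemidef)).1
  have h₁ := (Complex.le_def.mp (hρ.1.trace_mul_nonneg (sub_nonneg.mpr hQ₁).posSemidef)).1
  rw [hρ.trace_mul_one_sub] at h₁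
  simp only [Complex.zero_re, Complex.sub_re, Complex.one_re] at h₀ h₁
  exact ⟨h₀, by linarith⟩

lemma mul_re_trace_mul_le {σ Q : Matrix n n ℂ} (hρ : IsDensity ρ) {c : ℝ} (hc : 0 ≤ c)
    (hσ : c • (1 : Matrix n n ℂ) ≤ σ) (hQ : Q.PosSemidef) :
    c * (ρ * Q).trace.re ≤ (σ * Q).trace.re := by
  have hρσ : c • ρ ≤ σ := (smul_le_smul_of_nonneg_left hρ.le_one hc).trans hσ
  have := (Complex.le_def.mp (Matrix.trace_mul_le_trace_mul_of_le hρσ hQ)).1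
  simpa [Matrix.smul_mul, Matrix.trace_smul] using this

end IsDensity

lemma mul_logb_div_of_eq_zero_imp {b x y : ℝ} (h : y = 0 → x = 0) :
    x * Real.logb b (x / y) = x * Real.logb b x - x * Real.logb b y := by
  rcases eq_or_ne x 0 with rfl | hx
  · simp
  · rw [Real.logb_div hx (mt h hx), mul_sub]

lemma klBin_eq_neg_binEntropy_sub {x y : ℝ} (h₀ : y = 0 → x = 0) (h₁ : y = 1 → x = 1) :
    klBin x y = -(Real.binEntropy x / Real.log 2) - x * Real.logb 2 y
      - (1 - x) * Real.logb 2 (1 - y) := by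
  have h₁' : 1 - y = 0 → 1 - x = 0 := fun h =>
    sub_eq_zero.mpr (h₁ (sub_eq_zero.mp h).symm).symm
  rw [klBin, mul_logb_div_of_eq_zero_imp h₀, mul_logb_div_of_eq_zero_imp h₁', Real.binEntropy]
  simp only [Real.logb, Real.log_inv]
  ring

lemma neg_one_sub_mul_logb_le_klBin {x y : ℝ} (hx : x ≤ 1) (hy : y ∈ Set.Icc 0 1)
    (h₀ : y = 0 → x = 0) (h₁ : y = 1 → x = 1) :
    -1 - x * Real.logb 2 y ≤ klBin x y := by
  have hent : Real.binEntropy x / Real.log 2 ≤ 1 :=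
    div_le_one_of_le₀ Real.binEntropy_le_log_two (Real.log_nonneg one_le_two)
  have hcompl : (1 - x) * Real.logb 2 (1 - y) ≤ 0 :=
    mul_nonpos_of_nonneg_of_nonpos (by linarith)
      (Real.logb_nonpos one_lt_two (by linarith [hy.2]) (by linarith [hy.1]))
  rw [klBin_eq_neg_binEntropy_sub h₀ h₁]
  linarith

lemma one_sub_mul_le_mul_neg_logb {x y s τ : ℝ} (hτ : τ ≤ 1) (hx : 1 - τ ≤ x)
    (hy : y ∈ Set.Icc 0 1) (hys : y ≤ 2 ^ (-s)) (h₀ : y = 0 → x = 0) :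
    (1 - τ) * s ≤ x * -Real.logb 2 y := by
  rcases hy.1.eq_or_lt with rfl | hy₀
  · have : 1 - τ = 0 := by linarith [h₀ rfl]
    simp [this]
  have hs : s ≤ -Real.logb 2 y := by
    have := Real.logb_le_logb_of_le one_lt_two hy₀ hys
    rw [Real.logb_rpow two_pos (by norm_num)] at this
    linarith
  have hlog : 0 ≤ -Real.logb 2 y := neg_nonneg.mpr (Real.logb_nonpos one_lt_two hy.1 hy.2)
  calc (1 - τ) * s ≤ (1 - τ) * -Real.logb 2 y := mul_le_mul_of_nonneg_left hs (by linarith)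
    _ ≤ x * -Real.logb 2 y := mul_le_mul_of_nonneg_right hx hlog

theorem stmt3_general {K : Type*} [Fintype K] [Nonempty K]
    (ρ σ P : Matrix K K ℂ) (hρ : IsDensity ρ) (hσ : IsDensity σ)
    (hσpd : σ.PosDef)
    (hP1 : P.IsHermitian) (hP2 : P * P = P)
    (S₀ τ₁ τ₂ : ℝ) (hτ₁ : τ₁ ∈ Set.Icc (0:ℝ) 1)
    (h1 : 1 - τ₁ ≤ (ρ * P).trace.re)
    (h2 : (σ * P).trace.re ≤ (2:ℝ) ^ (-(S₀ - τ₂))) :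
    -1 + (1 - τ₁) * (S₀ - τ₂) - τ₁ * (-(Real.logb 2 (⨅ i, hσpd.1.eigenvalues i)))
      ≤ klBin (ρ * P).trace.re (σ * P).trace.re := by
  obtain ⟨i₀, hi₀⟩ := exists_eq_ciInf_of_finite (f := hσpd.1.eigenvalues)
  set lam := ⨅ i, hσpd.1.eigenvalues i
  set x := (ρ * P).trace.re
  set y := (σ * P).trace.re
  have hP : IsStarProjection P := ⟨hP2, hP1⟩
  have hlam_pos : 0 < lam := hi₀ ▸ hσpd.eigenvalues_pos i₀
  have hlog_lam : Real.logb 2 lam ≤ 0 :=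
    Real.logb_nonpos one_lt_two hlam_pos.le (hi₀ ▸ hσ.eigenvalues_le_one i₀)
  have hlamσ : lam • (1 : Matrix K K ℂ) ≤ σ :=
    hσpd.1.smul_one_le_of_le_eigenvalues fun i => ciInf_le (Set.finite_range _).bddBelow i
  have hx := hρ.re_trace_mul_mem_Icc hP.nonneg hP.le_one
  have hy := hσ.re_trace_mul_mem_Icc hP.nonneg hP.le_one
  have hxy₀ : lam * x ≤ y := hρ.mul_re_trace_mul_le hlam_pos.le hlamσ hP.nonneg.posSemidef
  have hxy₁ : lam * (1 - x) ≤ 1 - y := by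
    simpa [hρ.trace_mul_one_sub, hσ.trace_mul_one_sub] using
      hρ.mul_re_trace_mul_le hlam_pos.le hlamσ hP.one_sub_nonneg.posSemidef
  have h₀ : y = 0 → x = 0 := fun hy₀ => by nlinarith [hx.1]
  have h₁ : y = 1 → x = 1 := fun hy₁ => by nlinarith [hx.2]
  have hgain := one_sub_mul_le_mul_neg_logb hτ₁.2 h1 hy h2 h₀
  have hkl := neg_one_sub_mul_logb_le_klBin hx.2 hy h₀ h₁
  have hlam_term := mul_nonpos_of_nonneg_of_nonpos hτ₁.1 hlog_lam
  linarith

/-- lower bound on the measured relative entropy of a two-outcome PVM. -/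
theorem stmt3 {K : Type*} [Fintype K] [DecidableEq K] [Nonempty K]
    (ρ σ P : Matrix K K ℂ) (hρ : IsDensity ρ) (hσ : IsDensity σ)
    (hσpd : σ.PosDef)
    (hP1 : P.IsHermitian) (hP2 : P * P = P)
    (S₀ τ₁ τ₂ : ℝ) (hS₀ : 0 ≤ S₀) (hτ₁ : τ₁ ∈ Set.Icc (0:ℝ) 1) (hτ₂ : 0 ≤ τ₂)
    (h1 : 1 - τ₁ ≤ (ρ * P).trace.re)
    (h2 : (σ * P).trace.re ≤ (2:ℝ) ^ (-(S₀ - τ₂))) :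
    -1 + (1 - τ₁) * (S₀ - τ₂) - τ₁ * (-(Real.logb 2 (⨅ i, hσpd.1.eigenvalues i)))
      ≤ klBin (ρ * P).trace.re (σ * P).trace.re :=
  stmt3_general ρ σ P hρ hσ hσpd hP1 hP2 S₀ τ₁ τ₂ hτ₁ h1 h2
end

section
/- Let K be a finite-dimensional Hilbert space and a, b ∈ B(K) operators with 0 ≤ a ≤ 1 and b ≥ 0. Then 1 − (a+b)^{−1/2} a (a+b)^{−1/2} ≤ 2(1 − a) + 4b, where (a+b)^{−1/2} denotes the square root of the generalized (Moore–Penrose) inverse of a+b. -/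
open Matrix Kronecker BigOperators
open scoped ComplexOrder
open Classical

/-- square root of the generalized (Moore–Penrose) inverse of a Hermitian matrix. -/
noncomputable def ginvSqrt {n : Type*} [Fintype n] [DecidableEq n] (m : Matrix n n ℂ) :
    Matrix n n ℂ :=
  matFun (fun x => if x = 0 then 0 else (Real.sqrt x)⁻¹) m

/-!
Write `c = a + b` and let `P` be the functional calculus of `x ↦ (√x)⁻¹` at `c`; since
`(√0)⁻¹ = 0⁻¹ = 0` this is `ginvSqrt c`. Then `P` commutes with `c`, `P c = √c` and `P c P ≤ 1`,
and expanding gives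
`2 (1 - a) + 4 b - (1 - P a P) = (1 - P c P) + 4 (√c - a) + 2 (P - 1) a (P - 1) + (P - 2) b (P - 2)`.
Every summand is positive; for `√c - a` this is `a ≤ √a ≤ √c`, using `0 ≤ a ≤ 1` and the operator
monotonicity of the square root.
-/
theorem hayashiNagaoka_identity {R : Type*} [Ring R] {a b P : R} (h : Commute P (a + b)) :
    2 • (1 - a) + 4 • b - (1 - P * a * P) =
      (1 - P * (a + b) * P) + 4 • (P * (a + b) - a) + 2 • ((P - 1) * a * (P - 1)) +
        (P - 2) * b * (P - 2) := calc
  _ = (1 - P * (a + b) * P) + 4 • (P * (a + b) - a) + 2 • ((P - 1) * a * (P - 1)) +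
        (P - 2) * b * (P - 2) + 2 • ((a + b) * P - P * (a + b)) := by noncomm_ring
  _ = _ := by rw [h.eq, sub_self, smul_zero, add_zero]

namespace CFC

variable {A : Type*} [CStarAlgebra A] [PartialOrder A] [StarOrderedRing A]

lemma le_sqrt_of_le_one {a : A} (ha₀ : 0 ≤ a) (ha₁ : a ≤ 1) : a ≤ sqrt a := by
  have hspec : ∀ x ∈ spectrum ℝ a, x ≤ 1 := (CFC.le_one_iff a).mp ha₁
  rw [sqrt_eq_real_sqrt a, cfcₙ_eq_cfc]
  conv_lhs => rw [← cfc_id' ℝ a]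
  exact cfc_mono fun x hx => Real.le_sqrt_self_iff.mpr (hspec x hx)

section InvSqrt

variable {c : A} (hcont : ContinuousOn (fun x : ℝ => (√x)⁻¹) (spectrum ℝ c))
include hcont

lemma cfc_inv_sqrt_mul_self (hc : 0 ≤ c) : cfc (fun x : ℝ => (√x)⁻¹) c * c = sqrt c := by
  nth_rw 2 [← cfc_id' ℝ c]
  rw [← cfc_mul _ _ c, sqrt_eq_real_sqrt c, cfcₙ_eq_cfc]
  exact cfc_congr fun x _ => by rw [← div_eq_inv_mul, Real.div_sqrt]

lemma cfc_inv_sqrt_conj_le_one (hc : IsSelfAdjoint c) :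
    cfc (fun x : ℝ => (√x)⁻¹) c * c * cfc (fun x : ℝ => (√x)⁻¹) c ≤ 1 := by
  nth_rw 2 [← cfc_id' ℝ c]
  rw [← cfc_mul _ _ c, ← cfc_mul _ _ c]
  refine cfc_le_one _ c fun x _ => ?_
  rcases le_or_gt x 0 with hx | hx
  · simp [Real.sqrt_eq_zero'.mpr hx]
  · rw [inv_mul_eq_div, Real.div_sqrt, mul_inv_cancel₀ (Real.sqrt_pos.mpr hx).ne']

end InvSqrt

theorem hayashiNagaoka {a b : A} (ha₀ : 0 ≤ a) (ha₁ : a ≤ 1) (hb : 0 ≤ b)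
    (hcont : ContinuousOn (fun x : ℝ => (√x)⁻¹) (spectrum ℝ (a + b))) :
    1 - cfc (fun x : ℝ => (√x)⁻¹) (a + b) * a * cfc (fun x : ℝ => (√x)⁻¹) (a + b) ≤
      2 • (1 - a) + 4 • b := by
  set P := cfc (fun x : ℝ => (√x)⁻¹) (a + b)
  have hc : 0 ≤ a + b := add_nonneg ha₀ hb
  have hP : IsSelfAdjoint P := cfc_predicate _ _
  have hcomm : Commute P (a + b) := (Commute.refl (a + b)).cfc_real _
  have ha_le : a ≤ P * (a + b) := by
    rw [cfc_inv_sqrt_mul_self hcont hc]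
    exact (le_sqrt_of_le_one ha₀ ha₁).trans (sqrt_le_sqrt a (a + b) (le_add_of_nonneg_right hb))
  rw [← sub_nonneg, hayashiNagaoka_identity hcomm]
  have h₁ : 0 ≤ 1 - P * (a + b) * P := sub_nonneg.mpr (cfc_inv_sqrt_conj_le_one hcont (.of_nonneg hc))
  have h₂ : 0 ≤ (P - 1) * a * (P - 1) := (hP.sub (.one A)).conjugate_nonneg ha₀
  have h₃ : 0 ≤ (P - 2) * b * (P - 2) := (hP.sub (.ofNat 2)).conjugate_nonneg hb
  have h₄ : 0 ≤ 4 • (P * (a + b) - a) := nsmul_nonneg (sub_nonneg.mpr ha_le) 4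
  positivity

end CFC

namespace Matrix

variable {n : Type*} [Fintype n] [DecidableEq n]

lemma matFun_eq_cfc {m : Matrix n n ℂ} (hm : m.IsHermitian) (f : ℝ → ℝ) :
    matFun f m = cfc f m := by
  rw [matFun, dif_pos hm, hm.cfc_eq, IsHermitian.cfc, Unitary.conjStarAlgAut_apply]
  rfl

lemma ginvSqrt_eq_cfc {m : Matrix n n ℂ} (hm : m.IsHermitian) :
    ginvSqrt m = cfc (fun x : ℝ => (√x)⁻¹) m := by
  rw [ginvSqrt, matFun_eq_cfc hm]
  congr 1
  ext x
  split_ifs with hx <;> simp [hx]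

end Matrix

/-- Hayashi–Nagaoka operator inequality. -/
theorem stmt4 {n : Type*} [Fintype n] [DecidableEq n] (a b : Matrix n n ℂ)
    (ha : a.PosSemidef) (ha1 : ((1 : Matrix n n ℂ) - a).PosSemidef) (hb : b.PosSemidef) :
    ((2:ℂ) • ((1 : Matrix n n ℂ) - a) + (4:ℂ) • b
      - ((1 : Matrix n n ℂ) - ginvSqrt (a + b) * a * ginvSqrt (a + b))).PosSemidef := by
  rw [ginvSqrt_eq_cfc (ha.add hb).isHermitian, ofNat_smul_eq_nsmul (R := ℂ),
    ofNat_smul_eq_nsmul (R := ℂ)]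
  open scoped MatrixOrder Matrix.Norms.L2Operator in
  exact CFC.hayashiNagaoka ha.nonneg ha1 hb.nonneg (finite_real_spectrum.continuousOn _)
end

section
/- Let (T, Σ, μ) be a probability space, f, f_n : T → R measurable bounded functions with f_n(t) → f(t) pointwise for all t ∈ T, and (G_n) a sequence of measurable subsets of T with μ(G_n) → 1. Then limsup_{n→∞} inf_{t∈G_n} f_n(t) ≤ ess-inf_{t∈T} f, where ess-inf f := sup{c ∈ R : μ({t : f(t) < c}) = 0}. -/
open Matrix Kronecker BigOperators
open scoped ComplexOrder
open Classical

open MeasureTheory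

/-- the essential infimum as defined in the paper. -/
noncomputable def essInfVal {T : Type*} [MeasurableSpace T] (μ : Measure T) (f : T → ℝ) : ℝ :=
  sSup {c : ℝ | μ {t | f t < c} = 0}

/-!
Fix `ε > 0` and let `L` be the essential infimum of `f`. The set `A = {f < L + ε}` has positive
measure, and on it `fₙ < L + ε` eventually. By continuity of measure from below, a positive-measure
part `C ⊆ A` satisfies `fₙ < L + ε` for all `n ≥ N`, uniformly. Since `μ (Gₙᶜ) → 0`, eventually
`Gₙ` meets `C`, so `inf_{Gₙ} fₙ < L + ε`.
-/

open Filter Topology Set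

namespace MeasureTheory

variable {T ι : Type*} [MeasurableSpace T] {μ : Measure T}

lemma bddAbove_setOf_measure_setOf_lt_eq_zero [NeZero μ] (f : T → ℝ) :
    BddAbove {c : ℝ | μ {t | f t < c} = 0} := by
  by_contra hunbdd
  have hnull : ∀ k : ℕ, μ {t | f t < k} = 0 := fun k => by
    obtain ⟨c, hc, hkc⟩ := not_bddAbove_iff.1 hunbdd k
    exact measure_mono_null (fun t (ht : f t < k) => ht.trans hkc) hc
  have hcover : (⋃ k : ℕ, {t | f t < k}) = univ :=
    eq_univ_of_forall fun t => mem_iUnion.2 (exists_nat_gt (f t))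
  exact NeZero.ne μ (Measure.measure_univ_eq_zero.1 (hcover ▸ measure_iUnion_null hnull))

lemma measure_setOf_lt_essInfVal_add_ne_zero [NeZero μ] (f : T → ℝ) {ε : ℝ} (hε : 0 < ε) :
    μ {t | f t < essInfVal μ f + ε} ≠ 0 := fun hnull =>
  (lt_add_of_pos_right _ hε).not_ge (le_csSup (bddAbove_setOf_measure_setOf_lt_eq_zero f) hnull)

lemma exists_measure_ne_zero_forall_ge {A : Set T} {P : ℕ → T → Prop} (hA : μ A ≠ 0)
    (hP : ∀ t ∈ A, ∀ᶠ n in atTop, P n t) :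
    ∃ C, μ C ≠ 0 ∧ ∃ N, ∀ t ∈ C, ∀ n ≥ N, P n t := by
  set C : ℕ → Set T := fun N => {t ∈ A | ∀ n ≥ N, P n t}
  have hmono : Monotone C := fun N N' hNN' t ht => ⟨ht.1, fun n hn => ht.2 n (hNN'.trans hn)⟩
  have hunion : (⋃ N, C N) = A := Subset.antisymm (iUnion_subset fun N => sep_subset _ _)
    fun t ht => mem_iUnion.2 <| (eventually_atTop.1 (hP t ht)).imp fun _ hN => ⟨ht, hN⟩
  have hlim := tendsto_measure_iUnion_atTop (μ := μ) hmono
  rw [hunion] at hlim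
  obtain ⟨N, hN⟩ := (hlim.eventually_const_lt (pos_iff_ne_zero.2 hA)).exists
  exact ⟨C N, hN.ne', N, fun t ht => ht.2⟩

lemma tendsto_measure_compl_of_tendsto_measure_one [IsProbabilityMeasure μ] {l : Filter ι}
    {G : ι → Set T} (hG : ∀ i, MeasurableSet (G i)) (hGm : Tendsto (fun i => μ (G i)) l (𝓝 1)) :
    Tendsto (fun i => μ (G i)ᶜ) l (𝓝 0) := by
  have h := ENNReal.Tendsto.sub tendsto_const_nhds hGm (Or.inl ENNReal.one_ne_top)
  rw [tsub_self] at h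
  exact h.congr fun i => (prob_compl_eq_one_sub (hG i)).symm

lemma eventually_inter_nonempty_of_tendsto_measure_one [IsProbabilityMeasure μ] {l : Filter ι}
    {G : ι → Set T} (hG : ∀ i, MeasurableSet (G i)) (hGm : Tendsto (fun i => μ (G i)) l (𝓝 1))
    {C : Set T} (hC : μ C ≠ 0) : ∀ᶠ i in l, (C ∩ G i).Nonempty := by
  filter_upwards [(tendsto_measure_compl_of_tendsto_measure_one hG hGm).eventually_lt_const
    (pos_iff_ne_zero.2 hC)] with i hi
  by_contra hempty
  exact (measure_mono (subset_compl_iff_disjoint_right.2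
    (disjoint_iff_inter_eq_empty.2 (not_nonempty_iff_eq_empty.1 hempty)))).not_gt hi

end MeasureTheory

theorem stmt7_general {T : Type*} [MeasurableSpace T] (μ : Measure T) [IsProbabilityMeasure μ]
    (f : T → ℝ) (fn : ℕ → T → ℝ)
    (M : ℝ) (hbfn : ∀ n t, |fn n t| ≤ M)
    (hconv : ∀ t, Filter.Tendsto (fun n => fn n t) Filter.atTop (nhds (f t)))
    (G : ℕ → Set T) (hG : ∀ n, MeasurableSet (G n))
    (hGm : Filter.Tendsto (fun n => μ (G n)) Filter.atTop (nhds 1)) :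
    Filter.limsup (fun n => sInf (fn n '' G n)) Filter.atTop ≤ essInfVal μ f := by
  have hlower : ∀ n, ∀ x ∈ fn n '' G n, -M ≤ x := by
    rintro n _ ⟨t, -, rfl⟩
    exact neg_le_of_abs_le (hbfn n t)
  -- `min (-M) 0` rather than `-M`: `sInf ∅ = 0` when `G n` is empty.
  have hcobdd : IsCoboundedUnder (· ≤ ·) atTop fun n => sInf (fn n '' G n) :=
    isCoboundedUnder_le_of_le atTop fun n =>
      Real.le_sInf (fun x hx => (min_le_left _ _).trans (hlower n x hx)) (min_le_right (-M) 0)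
  refine le_of_forall_pos_le_add fun ε hε => limsup_le_of_le hcobdd ?_
  obtain ⟨C, hC, N, hN⟩ := exists_measure_ne_zero_forall_ge
    (measure_setOf_lt_essInfVal_add_ne_zero (μ := μ) f hε)
    fun t ht => (hconv t).eventually_lt_const ht
  filter_upwards [eventually_inter_nonempty_of_tendsto_measure_one hG hGm hC,
    eventually_ge_atTop N] with n ⟨t, htC, htG⟩ hn
  exact (csInf_le ⟨-M, hlower n⟩ ⟨t, htG, rfl⟩).trans (hN t htC n hn).le

/-- limsup of infima over sets of measure tending to one is bounded by
the essential infimum of the limit function. -/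
theorem stmt7 {T : Type*} [MeasurableSpace T] (μ : Measure T) [IsProbabilityMeasure μ]
    (f : T → ℝ) (fn : ℕ → T → ℝ) (hf : Measurable f) (hfn : ∀ n, Measurable (fn n))
    (M : ℝ) (hbf : ∀ t, |f t| ≤ M) (hbfn : ∀ n t, |fn n t| ≤ M)
    (hconv : ∀ t, Filter.Tendsto (fun n => fn n t) Filter.atTop (nhds (f t)))
    (G : ℕ → Set T) (hG : ∀ n, MeasurableSet (G n))
    (hGm : Filter.Tendsto (fun n => μ (G n)) Filter.atTop (nhds 1)) :
    Filter.limsup (fun n => sInf (fn n '' G n)) Filter.atTop ≤ essInfVal μ f :=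
  stmt7_general μ f fn M hbfn hconv G hG hGm
end

section
/- Let T be a finite set, X and J finite sets, and for each t ∈ T let V_t : X → P(J) be a stochastic matrix. Fix r ∈ P(X), let q_t(j) := Σ_x r(x)V_t(j|x), and for a ∈ N define the averaged channel V^a(j^a|x^a) := (1/|T|) Σ_t V_t^a(j^a|x^a), q^a := (1/|T|) Σ_t q_t^{⊗a}, the joint distribution p'^a(x^a,j^a) := r^{⊗a}(x^a) V^a(j^a|x^a), and information densities i_t^a(x^a,j^a) := (1/a) log(V_t^a(j^a|x^a)/q_t^{⊗a}(j^a)) and i^a(x^a,j^a) := (1/a) log(V^a(j^a|x^a)/q^a(j^a)). Then for all α, β ∈ R: P(i^a ≤ α) ≤ (1/|T|) Σ_{t∈T} P_t(i_t^a ≤ α + β) + |T| · 2^{−aβ}, where P is taken with respect to p'^a and P_t with respect to r^{⊗a}(x^a)V_t^a(j^a|x^a). -/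
open Matrix Kronecker BigOperators
open scoped ComplexOrder
open Classical

/-!
`P` is the average of the measures `r^{⊗a} V_t^a`, so it suffices to bound each of them on the
event `V^a ≤ 2^{aα} q^a`. Since `V_t^a ≤ |T| V^a`, on this event either `V_t^a ≤ 2^{a(α+β)} q_t^a`
or `q_t^a ≤ |T| 2^{-aβ} q^a`. The second event depends only on `j^a`, so its mass under
`r^{⊗a} V_t^a` is its `q_t^a`-mass, at most `|T| 2^{-aβ}` times its `q^a`-mass.
-/

open Finset

theorem IsProb.pi {ι A : Type*} [Fintype ι] [DecidableEq ι] [Fintype A] {p : ι → A → ℝ}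
    (hp : ∀ i, IsProb (p i)) : IsProb (fun x : ι → A => ∏ i, p i (x i)) :=
  ⟨fun x => prod_nonneg fun i _ => (hp i).1 (x i), by
    rw [← Fintype.prod_sum]
    exact prod_eq_one fun i _ => (hp i).2⟩

theorem IsProb.marginal {X J : Type*} [Fintype X] [Fintype J] {r : X → ℝ} {V : X → J → ℝ}
    (hr : IsProb r) (hV : ∀ x, IsProb (V x)) : IsProb (fun j => ∑ x, r x * V x j) :=
  ⟨fun j => sum_nonneg fun x _ => mul_nonneg (hr.1 x) ((hV x).1 j), by
    rw [sum_comm]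
    simp only [← mul_sum, (hV _).2, mul_one, hr.2]⟩

theorem sum_prod_mul_prod_eq_prod_sum_mul {ι X J : Type*} [Fintype ι] [DecidableEq ι]
    [Fintype X] (r : X → ℝ) (V : X → J → ℝ) (y : ι → J) :
    ∑ x : ι → X, (∏ i, r (x i)) * ∏ i, V (x i) (y i) = ∏ i, ∑ a, r a * V a (y i) := by
  simp only [← prod_mul_distrib, Fintype.prod_sum]

section AveragedChannel

variable {T Ω Y : Type*} [Fintype T] [Fintype Ω] [Fintype Y]

theorem sum_ite_le_mul_sum_of_marginal {R : Ω → ℝ} {W : Ω → Y → ℝ} {Q P : Y → ℝ}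
    (hQ : ∀ y, ∑ ω, R ω * W ω y = Q y) (hP : ∀ y, 0 ≤ P y) {κ : ℝ} (hκ : 0 ≤ κ) :
    (∑ ω, ∑ y, if Q y ≤ κ * P y then R ω * W ω y else 0) ≤ κ * ∑ y, P y := by
  rw [sum_comm, mul_sum]
  refine sum_le_sum fun y _ => ?_
  rw [sum_ite_irrel, sum_const_zero, hQ]
  split_ifs with h
  · exact h
  · exact mul_nonneg hκ (hP y)

theorem ite_le_ite_add_ite {w s q P c lam θ f : ℝ} (hc : 0 ≤ c) (hlam : 0 < lam) (hθ : 0 < θ)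
    (hf : 0 ≤ f) (hw : w ≤ c * s) :
    (if s ≤ lam * P then f else 0) ≤
      (if w ≤ lam * θ * q then f else 0) + (if q ≤ c * θ⁻¹ * P then f else 0) := by
  by_cases hs : s ≤ lam * P
  · by_cases hwq : w ≤ lam * θ * q
    · simp only [hs, hwq, if_true]
      split_ifs <;> linarith
    · have hθq : lam * (θ * q) ≤ lam * (c * P) :=
        calc lam * (θ * q) ≤ w := by linarith [not_le.1 hwq]
          _ ≤ c * s := hw
          _ ≤ c * (lam * P) := by gcongr
          _ = lam * (c * P) := by ring
      have hq : q ≤ c * θ⁻¹ * P :=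
        calc q = θ⁻¹ * (θ * q) := by field_simp
          _ ≤ θ⁻¹ * (c * P) :=
            mul_le_mul_of_nonneg_left (le_of_mul_le_mul_left hθq hlam) (by positivity)
          _ = c * θ⁻¹ * P := by ring
      simp only [hs, hwq, hq, if_true, if_false, zero_add, le_refl]
  · simp only [hs, if_false]
    split_ifs <;> linarith

theorem sum_ite_le_add_of_le_mul {R : Ω → ℝ} {W Wbar : Ω → Y → ℝ} {Q Qbar : Y → ℝ} {c : ℝ}
    (hR : ∀ ω, 0 ≤ R ω) (hW : ∀ ω y, 0 ≤ W ω y) (hQ : ∀ y, ∑ ω, R ω * W ω y = Q y)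
    (hc : 0 ≤ c) (hW_le : ∀ ω y, W ω y ≤ c * Wbar ω y)
    (hQbar : ∀ y, 0 ≤ Qbar y) (hQbar_sum : ∑ y, Qbar y = 1)
    {lam θ : ℝ} (hlam : 0 < lam) (hθ : 0 < θ) :
    (∑ ω, ∑ y, if Wbar ω y ≤ lam * Qbar y then R ω * W ω y else 0) ≤
      (∑ ω, ∑ y, if W ω y ≤ lam * θ * Q y then R ω * W ω y else 0) + c * θ⁻¹ :=
  calc _ ≤ ∑ ω, ∑ y, ((if W ω y ≤ lam * θ * Q y then R ω * W ω y else 0) +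
          (if Q y ≤ c * θ⁻¹ * Qbar y then R ω * W ω y else 0)) :=
        sum_le_sum fun ω _ => sum_le_sum fun y _ => ite_le_ite_add_ite hc hlam hθ
          (mul_nonneg (hR ω) (hW ω y)) (hW_le ω y)
    _ = (∑ ω, ∑ y, if W ω y ≤ lam * θ * Q y then R ω * W ω y else 0) +
          ∑ ω, ∑ y, if Q y ≤ c * θ⁻¹ * Qbar y then R ω * W ω y else 0 := by
        simp only [sum_add_distrib]
    _ ≤ _ := by
        grw [sum_ite_le_mul_sum_of_marginal hQ hQbar (by positivity), hQbar_sum, mul_one]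

theorem sum_ite_mixture_le [Nonempty T] {R : Ω → ℝ} {W : T → Ω → Y → ℝ} {Q : T → Y → ℝ}
    {Wbar : Ω → Y → ℝ} {Qbar : Y → ℝ} (hR : IsProb R) (hW : ∀ t ω, IsProb (W t ω))
    (hQ : ∀ t y, ∑ ω, R ω * W t ω y = Q t y)
    (hWbar : ∀ ω y, Wbar ω y = (1 / (Fintype.card T : ℝ)) * ∑ t, W t ω y)
    (hQbar : ∀ y, Qbar y = (1 / (Fintype.card T : ℝ)) * ∑ t, Q t y)
    {lam θ : ℝ} (hlam : 0 < lam) (hθ : 0 < θ) :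
    (∑ ω, ∑ y, if Wbar ω y ≤ lam * Qbar y then R ω * Wbar ω y else 0) ≤
      (1 / (Fintype.card T : ℝ)) *
          ∑ t, (∑ ω, ∑ y, if W t ω y ≤ lam * θ * Q t y then R ω * W t ω y else 0) +
        (Fintype.card T : ℝ) * θ⁻¹ := by
  set c : ℝ := (Fintype.card T : ℝ) with hc_def
  have hc : 0 < c := Nat.cast_pos.2 Fintype.card_pos
  have hQ_prob (t : T) : IsProb (Q t) := by
    simpa only [hQ] using hR.marginal (hW t)
  have hQbar_nonneg (y : Y) : 0 ≤ Qbar y := by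
    rw [hQbar]
    exact mul_nonneg (by positivity) (sum_nonneg fun t _ => (hQ_prob t).1 y)
  have hQbar_sum : ∑ y, Qbar y = 1 := by
    simp only [hQbar, ← mul_sum]
    rw [sum_comm]
    simp only [(hQ_prob _).2, sum_const, card_univ, nsmul_eq_mul, mul_one, ← hc_def]
    field_simp
  have hW_le (t : T) (ω : Ω) (y : Y) : W t ω y ≤ c * Wbar ω y := by
    rw [hWbar, ← mul_assoc, mul_one_div_cancel hc.ne', one_mul]
    exact single_le_sum (fun s _ => (hW s ω).1 y) (mem_univ t)
  have hmix (ω : Ω) (y : Y) :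
      (if Wbar ω y ≤ lam * Qbar y then R ω * Wbar ω y else 0) =
        (1 / c) * ∑ t, if Wbar ω y ≤ lam * Qbar y then R ω * W t ω y else 0 := by
    split_ifs
    · simp only [hWbar, mul_sum]
      exact sum_congr rfl fun t _ => by ring
    · simp
  calc _ = (1 / c) * ∑ ω, ∑ y, ∑ t,
        if Wbar ω y ≤ lam * Qbar y then R ω * W t ω y else 0 := by
        simp only [hmix, mul_sum]
    _ = (1 / c) * ∑ t, ∑ ω, ∑ y,
        if Wbar ω y ≤ lam * Qbar y then R ω * W t ω y else 0 := by
        rw [(sum_congr rfl fun ω _ => sum_comm).trans sum_comm]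
    _ ≤ (1 / c) * ∑ t,
        ((∑ ω, ∑ y, if W t ω y ≤ lam * θ * Q t y then R ω * W t ω y else 0) + c * θ⁻¹) := by
        gcongr with t
        exact sum_ite_le_add_of_le_mul hR.1 (fun ω => (hW t ω).1) (hQ t) hc.le (hW_le t)
          hQbar_nonneg hQbar_sum hlam hθ
    _ = _ := by
        rw [sum_add_distrib, sum_const, card_univ, nsmul_eq_mul, ← hc_def, mul_add]
        field_simp

end AveragedChannel

/-- Blackwell–Breiman–Thomasian inequality for the averaged channel. -/
theorem stmt9 {T X J : Type*} [Fintype T] [Fintype X] [Fintype J] [Nonempty T]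
    (V : T → X → J → ℝ) (hV : ∀ t x, IsProb (V t x))
    (r : X → ℝ) (hr : IsProb r) (a : ℕ) (α β : ℝ) :
    let q : T → J → ℝ := fun t j => ∑ x, r x * V t x j
    let Va : (Fin a → X) → (Fin a → J) → ℝ :=
      fun xs js => (1 / (Fintype.card T : ℝ)) * ∑ t, ∏ k, V t (xs k) (js k)
    let qa : (Fin a → J) → ℝ :=
      fun js => (1 / (Fintype.card T : ℝ)) * ∑ t, ∏ k, q t (js k)
    let pa : (Fin a → X) → (Fin a → J) → ℝ :=
      fun xs js => (∏ k, r (xs k)) * Va xs js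
    (∑ xs : Fin a → X, ∑ js : Fin a → J,
        if Va xs js ≤ (2:ℝ) ^ ((a : ℝ) * α) * qa js then pa xs js else 0)
      ≤ (1 / (Fintype.card T : ℝ)) * ∑ t, (∑ xs : Fin a → X, ∑ js : Fin a → J,
          if (∏ k, V t (xs k) (js k)) ≤ (2:ℝ) ^ ((a : ℝ) * (α + β)) * ∏ k, q t (js k)
          then (∏ k, r (xs k)) * ∏ k, V t (xs k) (js k) else 0)
        + (Fintype.card T : ℝ) * (2:ℝ) ^ (-(a : ℝ) * β) := by
  intro q Va qa pa
  have hR : IsProb fun xs : Fin a → X => ∏ k, r (xs k) := IsProb.pi fun _ => hr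
  have hW (t : T) (xs : Fin a → X) : IsProb fun js : Fin a → J => ∏ k, V t (xs k) (js k) :=
    IsProb.pi fun k => hV t (xs k)
  have hmarg (t : T) (js : Fin a → J) :
      ∑ xs : Fin a → X, (∏ k, r (xs k)) * ∏ k, V t (xs k) (js k) = ∏ k, q t (js k) :=
    sum_prod_mul_prod_eq_prod_sum_mul r (V t) js
  have hVa (xs : Fin a → X) (js : Fin a → J) :
      Va xs js = (1 / (Fintype.card T : ℝ)) * ∑ t, ∏ k, V t (xs k) (js k) := rfl
  have hqa (js : Fin a → J) : qa js = (1 / (Fintype.card T : ℝ)) * ∑ t, ∏ k, q t (js k) := rfl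
  rw [mul_add, Real.rpow_add two_pos, neg_mul, Real.rpow_neg zero_le_two]
  exact sum_ite_mixture_le hR hW hmarg hVa hqa (by positivity) (by positivity)
end
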